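/- arXiv:1510.03570 — 3 statements merged into one kernel-verified Lean document; each statement's English description precedes it below -/
import Mathlib

section
/- For every p ∈ ℝⁿ there exist a unique constant c_ε(p) and a constant K > 0 depending only on the Lipschitz norm of g (and on n) such that |v^ε(x,t) − p·x − c_ε(p) t| ≤ K for all x ∈ ℝⁿ and t ≥ 0; moreover 0 ≤ c_ε(p) ≤ ε^{1−α} ‖g‖_∞, and c_ε(p) > 0 whenever g(s) < 0 for all s. -/
/-!
Planar functions `p·x + b t` are sub- or supersolutions according to the sign of
`b + ε^{1-α} g`, and by periodicity of `g` the equation is invariant under integer shifts of the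
solution as well as under spatial and temporal translations. The comparison principle (proved by a
penalized weak maximum principle on strips `ℝⁿ × [0, T]`) therefore gives
`p·x ≤ v ≤ p·x + ε^{1-α} M t`, the oscillation bound `|v(x,t) - p·x - v(0,t)| ≤ 1`, and the
quasi-additivity `|φ(s+t) - φ(s) - φ(t)| ≤ 2` of `φ = v(0,·)`. A nonnegative quasi-additive
function stays within its defect of `c t`, where `c t = lim φ(2ᵏ t) / 2ᵏ`; comparing once more with
planar sub- and supersolutions bounds `c`.
-/

open Filter Set

/-- The (coordinate) Laplacian of a function on `ℝⁿ`. -/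
noncomputable def lap {n : ℕ} (f : EuclideanSpace ℝ (Fin n) → ℝ)
    (x : EuclideanSpace ℝ (Fin n)) : ℝ :=
  ∑ i, fderiv ℝ (fun y => fderiv ℝ f y (EuclideanSpace.single i 1)) x
    (EuclideanSpace.single i 1)

open Topology InnerProductSpace Laplacian NNReal

variable {n : ℕ}

local notation "E" => EuclideanSpace ℝ (Fin n)

section Laplacian

theorem lap_eq_laplacian {f : E → ℝ} (hf : ContDiff ℝ 2 f) (x : E) : lap f x = Δ f x := by
  have hf' : Differentiable ℝ (fderiv ℝ f) :=
    (hf.fderiv_right (by norm_num)).differentiable one_ne_zero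
  rw [laplacian_eq_iteratedFDeriv_orthonormalBasis f (EuclideanSpace.basisFun (Fin n) ℝ)]
  refine Finset.sum_congr rfl fun i _ => ?_
  rw [fderiv_clm_apply (hf' x) (differentiableAt_const _), iteratedFDeriv_two_apply]
  simp

theorem lap_sub {f g : E → ℝ} (hf : ContDiff ℝ 2 f) (hg : ContDiff ℝ 2 g) (x : E) :
    lap (fun y => f y - g y) x = lap f x - lap g x := by
  rw [lap_eq_laplacian (hf.sub hg), lap_eq_laplacian hf, lap_eq_laplacian hg]
  exact hf.contDiffAt.laplacian_sub hg.contDiffAt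

theorem lap_const_mul {f : E → ℝ} (hf : ContDiff ℝ 2 f) (c : ℝ) (x : E) :
    lap (fun y => c * f y) x = c * lap f x := by
  rw [lap_eq_laplacian (contDiff_const.mul hf), lap_eq_laplacian hf]
  exact laplacian_smul c hf.contDiffAt

theorem lap_add_const (f : E → ℝ) (c : ℝ) (x : E) : lap (fun y => f y + c) x = lap f x := by
  simp only [lap, fderiv_add_const]

theorem lap_sub_const (f : E → ℝ) (c : ℝ) (x : E) : lap (fun y => f y - c) x = lap f x := by
  simp only [lap, fderiv_sub_const]

theorem lap_comp_add_right (f : E → ℝ) (z x : E) :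
    lap (fun y => f (y + z)) x = lap f (x + z) := by
  simp only [lap, fderiv_comp_add_right]
  refine Finset.sum_congr rfl fun i _ => ?_
  rw [fderiv_comp_add_right (f := fun y => fderiv ℝ f y (EuclideanSpace.single i 1))]

theorem lap_clm (ℓ : E →L[ℝ] ℝ) (x : E) : lap ℓ x = 0 := by
  simp [lap, ContinuousLinearMap.fderiv]

theorem lap_norm_sq (x : E) : lap (fun y => ‖y‖ ^ 2) x = 2 * n := by
  have key (e : E) :
      (fun y => fderiv ℝ (fun y : E => ‖y‖ ^ 2) y e) = ⇑(2 • innerSL ℝ e) := by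
    ext y
    simp [real_inner_comm]
  simp only [lap, key, ContinuousLinearMap.fderiv]
  simp [mul_comm]

theorem deriv_deriv_nonpos_of_isLocalMax {φ : ℝ → ℝ} {s : ℝ} (h : IsLocalMax φ s)
    (hc : ContinuousAt φ s) : deriv (deriv φ) s ≤ 0 := by
  by_contra! hpos
  have hconst : φ =ᶠ[𝓝 s] fun _ => φ s :=
    ((isLocalMin_of_deriv_deriv_pos hpos h.deriv_eq_zero hc).and h).mono
      fun r hr => le_antisymm hr.2 hr.1
  simp [hconst.deriv.deriv_eq] at hpos

theorem lap_nonpos_of_isLocalMax {f : E → ℝ} {x : E} (hf : ContDiff ℝ 2 f)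
    (h : IsLocalMax f x) : lap f x ≤ 0 := by
  refine Finset.sum_nonpos fun i _ => ?_
  set e : E := EuclideanSpace.single i 1
  have hf' : Differentiable ℝ fun y => fderiv ℝ f y e :=
    ((hf.fderiv_right (by norm_num)).differentiable one_ne_zero).clm_apply
      (differentiable_const e)
  have hline (s : ℝ) : HasDerivAt (fun r : ℝ => x + r • e) e s := by
    simpa using ((hasDerivAt_id s).smul_const e).const_add x
  have hderiv : deriv (fun r : ℝ => f (x + r • e)) = fun r => fderiv ℝ f (x + r • e) e :=
    funext fun s =>
      (((hf.differentiable two_ne_zero) _).hasFDerivAt.comp_hasDerivAt s (hline s)).deriv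
  have hmax : IsLocalMax (fun r : ℝ => f (x + r • e)) 0 :=
    IsLocalMax.comp_continuous (f := f) (by simpa using h) (hline 0).continuousAt
  calc fderiv ℝ (fun y => fderiv ℝ f y e) x e
      = deriv (deriv fun r : ℝ => f (x + r • e)) 0 := by
        rw [hderiv]
        simpa [Function.comp_def] using
          ((hf' _).hasFDerivAt.comp_hasDerivAt 0 (hline 0)).deriv.symm
    _ ≤ 0 := deriv_deriv_nonpos_of_isLocalMax hmax
        (hf.continuous.continuousAt.comp (hline 0).continuousAt)

end Laplacian

section MaximumPrinciple

structure ParabolicRegular (u : E → ℝ → ℝ) : Prop where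
  continuousOn : ContinuousOn (fun q : E × ℝ => u q.1 q.2) {q | 0 ≤ q.2}
  contDiff : ∀ t, 0 < t → ContDiff ℝ 2 fun x => u x t
  differentiableAt : ∀ x t, 0 < t → DifferentiableAt ℝ (u x) t

noncomputable def heatOp (u : E → ℝ → ℝ) (x : E) (t : ℝ) : ℝ :=
  deriv (u x) t - lap (fun y => u y t) x

theorem deriv_nonneg_of_isMaxOn_Icc {φ : ℝ → ℝ} {a b : ℝ} (hab : a < b)
    (hd : DifferentiableAt ℝ φ b) (hmax : IsMaxOn φ (Icc a b) b) : 0 ≤ deriv φ b := by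
  have := hmax.localize.hasFDerivWithinAt_nonpos hd.hasFDerivAt.hasFDerivWithinAt
    (sub_mem_posTangentConeAt_of_segment_subset
      ((convex_Icc a b).segment_subset (right_mem_Icc.2 hab.le) (left_mem_Icc.2 hab.le)))
  rw [hd.hasDerivAt.hasFDerivAt.fderiv] at this
  simp only [ContinuousLinearMap.toSpanSingleton_apply, smul_eq_mul] at this
  nlinarith

theorem nonpos_of_heatOp_neg {ψ : E → ℝ → ℝ} (hψ : ParabolicRegular ψ) (h0 : ∀ x, ψ x 0 ≤ 0)
    (hfar : ∀ T, ∃ R, ∀ x t, R ≤ ‖x‖ → 0 ≤ t → t ≤ T → ψ x t ≤ 0)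
    (hheat : ∀ x t, 0 < t → 0 < ψ x t → heatOp ψ x t < 0) :
    ∀ x t, 0 ≤ t → ψ x t ≤ 0 := by
  intro x₁ T hT
  by_contra! hpos
  obtain ⟨R, hR⟩ := hfar T
  set S := Metric.closedBall (0 : E) (max R ‖x₁‖) ×ˢ Icc 0 T
  have hx₁S : (x₁, T) ∈ S := ⟨by simp, hT, le_rfl⟩
  obtain ⟨⟨x₀, t₀⟩, ⟨hx₀, ht₀I⟩, hmax⟩ :=
    ((isCompact_closedBall _ _).prod isCompact_Icc).exists_isMaxOn ⟨_, hx₁S⟩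
      (hψ.continuousOn.mono fun q hq => hq.2.1)
  have hψ₀ : 0 < ψ x₀ t₀ := hpos.trans_le (hmax hx₁S)
  have hx₀R : ‖x₀‖ < R := by
    by_contra! h
    exact hψ₀.not_ge (hR x₀ t₀ h ht₀I.1 ht₀I.2)
  have ht₀ : 0 < t₀ := ht₀I.1.lt_of_ne (by rintro rfl; exact hψ₀.not_ge (h0 x₀))
  have hspace : IsLocalMax (fun y => ψ y t₀) x₀ := by
    filter_upwards [Metric.isOpen_ball.mem_nhds (mem_ball_zero_iff.2 hx₀R)] with y hy
    have hyS : (y, t₀) ∈ S := ⟨Metric.closedBall_subset_closedBall (le_max_left _ _)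
      (Metric.ball_subset_closedBall hy), ht₀I⟩
    exact hmax hyS
  have htime : IsMaxOn (ψ x₀) (Icc 0 t₀) t₀ := fun t ht =>
    hmax (show (x₀, t) ∈ S from ⟨hx₀, ht.1, ht.2.trans ht₀I.2⟩)
  have hneg := hheat x₀ t₀ ht₀ hψ₀
  have hlap := lap_nonpos_of_isLocalMax (hψ.contDiff t₀ ht₀) hspace
  have hderiv := deriv_nonneg_of_isMaxOn_Icc ht₀ (hψ.differentiableAt x₀ t₀ ht₀) htime
  rw [heatOp] at hneg
  linarith

end MaximumPrinciple

section Strips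

def BddOnStrips (d : E → ℝ → ℝ) : Prop :=
  ∀ T, ∃ B, ∀ x, ∀ t ∈ Icc 0 T, |d x t| ≤ B

variable {d e : EuclideanSpace ℝ (Fin n) → ℝ → ℝ}

theorem BddOnStrips.sub (hd : BddOnStrips d) (he : BddOnStrips e) : BddOnStrips (d - e) := by
  intro T
  obtain ⟨B, hB⟩ := hd T
  obtain ⟨B', hB'⟩ := he T
  exact ⟨B + B', fun x t ht => (abs_sub _ _).trans (add_le_add (hB x t ht) (hB' x t ht))⟩

theorem BddOnStrips.neg (hd : BddOnStrips d) : BddOnStrips (-d) := by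
  simpa [BddOnStrips] using hd

theorem BddOnStrips.add_const (hd : BddOnStrips d) (c : ℝ) :
    BddOnStrips fun x t => d x t + c := by
  intro T
  obtain ⟨B, hB⟩ := hd T
  exact ⟨B + |c|, fun x t ht => (abs_add_le _ _).trans (add_le_add_left (hB x t ht) _)⟩

theorem bddOnStrips_mul_time (b : ℝ) : BddOnStrips fun (_ : E) t => b * t :=
  fun T => ⟨|b| * |T|, fun _ t ht => by
    rw [abs_mul]
    exact mul_le_mul_of_nonneg_left (abs_le_abs_of_nonneg ht.1 ht.2) (abs_nonneg b)⟩

theorem BddOnStrips.translate (hd : BddOnStrips d) (z : E) {s : ℝ} (hs : 0 ≤ s) :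
    BddOnStrips fun x t => d (x + z) (s + t) := by
  intro T
  obtain ⟨B, hB⟩ := hd (s + T)
  exact ⟨B, fun x t ht => hB _ _ ⟨by linarith [ht.1], by linarith [ht.2]⟩⟩

end Strips

section Comparison

variable {d : EuclideanSpace ℝ (Fin n) → ℝ → ℝ} {K δ : ℝ}

/-- The `‖x‖²` term pushes `d` below zero at spatial infinity, and the `t` term makes the
inequality for `∂ₜ - Δ` strict. -/
noncomputable def penalize (K δ : ℝ) (d : E → ℝ → ℝ) (x : E) (t : ℝ) : ℝ :=
  Real.exp (-K * t) * d x t - δ * (‖x‖ ^ 2 + (2 * n + 1) * t)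

theorem ParabolicRegular.penalize (hd : ParabolicRegular d) :
    ParabolicRegular (penalize K δ d) := by
  have hquad : ContDiff ℝ 2 fun x : E => ‖x‖ ^ 2 := contDiff_norm_sq ℝ
  refine ⟨?_, fun t ht => ?_, fun x t ht => ?_⟩
  · exact ((Real.continuous_exp.comp (continuous_const.mul continuous_snd)).continuousOn.mul
      hd.continuousOn).sub (continuous_const.mul ((hquad.continuous.comp continuous_fst).add
        (continuous_const.mul continuous_snd))).continuousOn
  · exact (contDiff_const.mul (hd.contDiff t ht)).sub
      (contDiff_const.mul (hquad.add contDiff_const))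
  · have := hd.differentiableAt x t ht
    unfold _root_.penalize
    fun_prop

theorem heatOp_penalize (hd : ParabolicRegular d) {x : E} {t : ℝ} (ht : 0 < t) :
    heatOp (penalize K δ d) x t = Real.exp (-K * t) * (heatOp d x t - K * d x t) - δ := by
  have hquad : ContDiff ℝ 2 fun x : E => ‖x‖ ^ 2 := contDiff_norm_sq ℝ
  have hexp : HasDerivAt (fun t => Real.exp (-K * t)) (Real.exp (-K * t) * -K) t := by
    simpa using ((hasDerivAt_id t).const_mul (-K)).exp
  have hderiv : HasDerivAt (penalize K δ d x)
      (Real.exp (-K * t) * (deriv (d x) t - K * d x t) - δ * (2 * n + 1)) t := by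
    refine ((hexp.mul (hd.differentiableAt x t ht).hasDerivAt).sub
      ((((hasDerivAt_id t).const_mul (2 * (n : ℝ) + 1)).const_add (‖x‖ ^ 2)).const_mul
        δ)).congr_deriv ?_
    ring
  have hlap : lap (fun y => penalize K δ d y t) x
      = Real.exp (-K * t) * lap (fun y => d y t) x - δ * (2 * n) := by
    simp only [penalize]
    rw [lap_sub (contDiff_const.mul (hd.contDiff t ht))
        (contDiff_const.mul (hquad.add contDiff_const)), lap_const_mul (hd.contDiff t ht),
      lap_const_mul (hquad.add contDiff_const), lap_add_const, lap_norm_sq]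
  rw [heatOp, hderiv.deriv, hlap, heatOp]
  ring

theorem penalize_nonpos_of_sqrt_le (hK : 0 ≤ K) (hδ : 0 < δ) {B T : ℝ}
    (hB : ∀ x, ∀ t ∈ Icc 0 T, |d x t| ≤ B) {x : E} {t : ℝ} (hx : Real.sqrt (|B| / δ) ≤ ‖x‖)
    (ht : t ∈ Icc 0 T) : penalize K δ d x t ≤ 0 := by
  have hdB : Real.exp (-K * t) * d x t ≤ |B| :=
    calc Real.exp (-K * t) * d x t ≤ Real.exp (-K * t) * |d x t| :=
          mul_le_mul_of_nonneg_left (le_abs_self _) (Real.exp_pos _).le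
      _ ≤ 1 * |B| := mul_le_mul (Real.exp_le_one_iff.2 (by nlinarith [ht.1]))
          ((hB x t ht).trans (le_abs_self B)) (abs_nonneg _) zero_le_one
      _ = |B| := one_mul _
  have hxB : |B| ≤ δ * ‖x‖ ^ 2 := by
    have := pow_le_pow_left₀ (Real.sqrt_nonneg _) hx 2
    rwa [Real.sq_sqrt (by positivity), div_le_iff₀' hδ] at this
  have : 0 ≤ δ * ((2 * n + 1) * t) := by have := ht.1; positivity
  rw [penalize]
  nlinarith

theorem nonpos_of_heatOp_le_mul (hK : 0 ≤ K) (hd : ParabolicRegular d) (hb : BddOnStrips d)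
    (h0 : ∀ x, d x 0 ≤ 0) (hheat : ∀ x t, 0 < t → 0 < d x t → heatOp d x t ≤ K * d x t) :
    ∀ x t, 0 ≤ t → d x t ≤ 0 := by
  have key (δ : ℝ) (hδ : 0 < δ) : ∀ x t, 0 ≤ t → penalize K δ d x t ≤ 0 := by
    refine nonpos_of_heatOp_neg hd.penalize (fun x => ?_) (fun T => ?_) (fun x t ht hψ => ?_)
    · simpa [penalize] using (h0 x).trans (by positivity)
    · obtain ⟨B, hB⟩ := hb T
      exact ⟨_, fun x t hx ht hT => penalize_nonpos_of_sqrt_le hK hδ hB hx ⟨ht, hT⟩⟩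
    · have hdpos : 0 < d x t := by
        have : 0 < Real.exp (-K * t) * d x t :=
          hψ.trans_le (sub_le_self _ (by have := ht.le; positivity))
        exact pos_of_mul_pos_right this (Real.exp_pos _).le
      have := mul_le_mul_of_nonneg_left (hheat x t ht hdpos) (Real.exp_pos (-K * t)).le
      rw [heatOp_penalize hd ht]
      nlinarith
  intro x t ht
  set C := ‖x‖ ^ 2 + (2 * n + 1) * t
  have hC : 0 ≤ C := by positivity
  have hexp : Real.exp (-K * t) * d x t ≤ 0 := le_of_forall_pos_lt_add fun ε hε => by
    have hδ := key (ε / (C + 1)) (by positivity) x t ht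
    have : ε / (C + 1) * C < ε := by
      rw [div_mul_eq_mul_div, div_lt_iff₀ (by positivity)]
      nlinarith
    rw [penalize] at hδ
    linarith
  exact nonpos_of_mul_nonpos_right hexp (Real.exp_pos _)

variable {u w : EuclideanSpace ℝ (Fin n) → ℝ → ℝ}

theorem ParabolicRegular.sub (hu : ParabolicRegular u) (hw : ParabolicRegular w) :
    ParabolicRegular (u - w) :=
  ⟨hu.continuousOn.sub hw.continuousOn, fun t ht => (hu.contDiff t ht).sub (hw.contDiff t ht),
    fun x t ht => (hu.differentiableAt x t ht).sub (hw.differentiableAt x t ht)⟩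

theorem heatOp_sub (hu : ParabolicRegular u) (hw : ParabolicRegular w) {x : E} {t : ℝ}
    (ht : 0 < t) : heatOp (u - w) x t = heatOp u x t - heatOp w x t := by
  simp only [heatOp, Pi.sub_apply]
  rw [deriv_sub (hu.differentiableAt x t ht) (hw.differentiableAt x t ht),
    lap_sub (hu.contDiff t ht) (hw.contDiff t ht)]
  ring

theorem comparison_principle {F : ℝ → ℝ} {K : ℝ≥0} (hF : LipschitzWith K F)
    (hu : ParabolicRegular u) (hw : ParabolicRegular w) (hb : BddOnStrips (u - w))
    (h0 : ∀ x, u x 0 ≤ w x 0)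
    (hsub : ∀ x t, 0 < t → heatOp u x t + F (u x t) ≤ heatOp w x t + F (w x t)) :
    ∀ x t, 0 ≤ t → u x t ≤ w x t := by
  intro x t ht
  refine sub_nonpos.1 (nonpos_of_heatOp_le_mul K.coe_nonneg (hu.sub hw) hb
    (fun x => sub_nonpos.2 (h0 x)) (fun x t ht hpos => ?_) x t ht)
  replace hpos : 0 < u x t - w x t := hpos
  have hLip : F (w x t) - F (u x t) ≤ K * (u x t - w x t) := by
    have := hF.dist_le_mul (w x t) (u x t)
    rw [Real.dist_eq, Real.dist_eq, abs_sub_comm (w x t), abs_of_pos hpos] at this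
    exact (le_abs_self _).trans this
  rw [heatOp_sub hu hw ht]
  simp only [Pi.sub_apply]
  linarith [hsub x t ht]

end Comparison

section Solutions

structure IsHeatSolution (F : ℝ → ℝ) (u : E → ℝ → ℝ) : Prop extends ParabolicRegular u where
  heatOp_add_eq_zero : ∀ x t, 0 < t → heatOp u x t + F (u x t) = 0

variable {F : ℝ → ℝ} {u : EuclideanSpace ℝ (Fin n) → ℝ → ℝ}

theorem heatOp_translate (u : E → ℝ → ℝ) (z : E) (s m : ℝ) (x : E) (t : ℝ) :
    heatOp (fun x t => u (x + z) (s + t) - m) x t = heatOp u (x + z) (s + t) := by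
  simp only [heatOp, deriv_sub_const, deriv_comp_const_add,
    lap_sub_const (fun y => u (y + z) (s + t)), lap_comp_add_right (fun y => u y (s + t))]

theorem ParabolicRegular.translate (hu : ParabolicRegular u) (z : E) {s : ℝ} (hs : 0 ≤ s)
    (m : ℝ) : ParabolicRegular fun x t => u (x + z) (s + t) - m := by
  refine ⟨?_, fun t ht => ?_, fun x t ht => ?_⟩
  · refine (hu.continuousOn.comp ((continuous_fst.add continuous_const).prodMk
      (continuous_const.add continuous_snd)).continuousOn fun q hq => ?_).sub continuousOn_const
    exact add_nonneg hs hq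
  · exact ((hu.contDiff (s + t) (by linarith)).comp (contDiff_id.add contDiff_const)).sub
      contDiff_const
  · exact (((hu.differentiableAt (x + z) (s + t) (by linarith)).hasDerivAt.comp_const_add
      s t).differentiableAt).sub_const m

theorem IsHeatSolution.translate (hu : IsHeatSolution F u) (hF : Function.Periodic F 1) (z : E)
    {s : ℝ} (hs : 0 ≤ s) (m : ℤ) : IsHeatSolution F fun x t => u (x + z) (s + t) - m :=
  ⟨hu.toParabolicRegular.translate z hs m, fun x t ht => by
    rw [heatOp_translate, ← mul_one (m : ℝ), hF.sub_int_mul_eq]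
    exact hu.heatOp_add_eq_zero _ _ (by linarith)⟩

theorem parabolicRegular_planar (ℓ : E →L[ℝ] ℝ) (b : ℝ) :
    ParabolicRegular fun x t => ℓ x + b * t :=
  ⟨by fun_prop, fun _ _ => ℓ.contDiff.add contDiff_const, fun _ _ _ => by fun_prop⟩

theorem heatOp_planar (ℓ : E →L[ℝ] ℝ) (b : ℝ) (x : E) (t : ℝ) :
    heatOp (fun x t => ℓ x + b * t) x t = b := by
  have : deriv (fun t => ℓ x + b * t) t = b := by
    simp
  simp only [heatOp, this, lap_add_const (fun y => ℓ y), lap_clm, sub_zero]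

end Solutions

section Quasimorphism

theorem eq_zero_of_add_of_abs_le {D : ℝ → ℝ} {B : ℝ}
    (hadd : ∀ s t, 0 < s → 0 < t → D (s + t) = D s + D t) (hB : ∀ t, 0 < t → |D t| ≤ B)
    {t : ℝ} (ht : 0 < t) : D t = 0 := by
  have hmul : ∀ N : ℕ, D ((N + 1) * t) = (N + 1) * D t := by
    intro N
    induction N with
    | zero => simp
    | succ N ih =>
      push_cast
      rw [show ((N : ℝ) + 1 + 1) * t = (N + 1) * t + t by ring, hadd _ _ (by positivity) ht, ih]
      ring
  by_contra hne
  obtain ⟨N, hN⟩ := exists_nat_gt (B / |D t|)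
  have hpos : 0 < |D t| := abs_pos.2 hne
  have := hB _ (by positivity : (0 : ℝ) < (N + 1) * t)
  rw [hmul, abs_mul, abs_of_pos (by positivity : (0 : ℝ) < N + 1)] at this
  rw [div_lt_iff₀ hpos] at hN
  nlinarith

theorem eq_mul_of_add_of_nonneg {φ : ℝ → ℝ}
    (hadd : ∀ s t, 0 < s → 0 < t → φ (s + t) = φ s + φ t) (hnn : ∀ t, 0 < t → 0 ≤ φ t)
    {t : ℝ} (ht : 0 < t) : φ t = φ 1 * t := by
  have hmono : ∀ s t, 0 < s → s ≤ t → φ s ≤ φ t := by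
    intro s t hs hst
    rcases hst.eq_or_lt with rfl | hlt
    · rfl
    · have := hadd s (t - s) hs (sub_pos.2 hlt)
      rw [add_sub_cancel] at this
      linarith [hnn (t - s) (sub_pos.2 hlt)]
  -- `φ t - φ 1 * t` is additive and, being 1-periodic, bounded by its values on `(0, 1]`
  have hbdd : ∀ k : ℕ, ∀ t : ℝ, 0 < t → t ≤ k + 1 → |φ t - φ 1 * t| ≤ φ 1 := by
    intro k
    induction k with
    | zero =>
      intro t ht ht1
      rw [Nat.cast_zero, zero_add] at ht1
      have := hmono t 1 ht ht1
      rw [abs_le]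
      constructor <;> nlinarith [hnn t ht, hnn 1 one_pos]
    | succ k ih =>
      intro t ht htk
      rcases le_or_gt t 1 with ht1 | ht1
      · exact ih t ht (by linarith [(k.cast_nonneg : (0 : ℝ) ≤ k)])
      · have := hadd (t - 1) 1 (by linarith) one_pos
        rw [sub_add_cancel] at this
        rw [this, show φ (t - 1) + φ 1 - φ 1 * t = φ (t - 1) - φ 1 * (t - 1) by ring]
        exact ih _ (by linarith) (by push_cast at htk; linarith)
  refine sub_eq_zero.1 (eq_zero_of_add_of_abs_le (D := fun t => φ t - φ 1 * t) (B := φ 1)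
    (fun s t hs ht => by simp only [hadd s t hs ht]; ring) (fun t ht => ?_) ht)
  obtain ⟨k, hk⟩ := exists_nat_ge t
  exact hbdd k t ht (by linarith)

noncomputable def homogenization (f : ℝ → ℝ) (t : ℝ) : ℝ :=
  limUnder atTop fun k : ℕ => f (2 ^ k * t) / 2 ^ k

variable {f : ℝ → ℝ} {C : ℝ}

theorem tendsto_homogenization (hadd : ∀ s t, 0 < s → 0 < t → |f (s + t) - f s - f t| ≤ C)
    {t : ℝ} (ht : 0 < t) :
    Tendsto (fun k : ℕ => f (2 ^ k * t) / 2 ^ k) atTop (𝓝 (homogenization f t)) ∧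
      |f t - homogenization f t| ≤ C := by
  have hstep (k : ℕ) :
      dist (f (2 ^ k * t) / 2 ^ k) (f (2 ^ (k + 1) * t) / 2 ^ (k + 1)) ≤ C / 2 / 2 ^ k := by
    have := hadd (2 ^ k * t) (2 ^ k * t) (by positivity) (by positivity)
    have e : f (2 ^ k * t) / 2 ^ k - f (2 ^ (k + 1) * t) / 2 ^ (k + 1) =
        -((f (2 ^ k * t + 2 ^ k * t) - f (2 ^ k * t) - f (2 ^ k * t)) / 2 ^ (k + 1)) := by
      rw [show (2 : ℝ) ^ k * t + 2 ^ k * t = 2 ^ (k + 1) * t by ring]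
      field_simp
      ring
    rw [Real.dist_eq, e, abs_neg, abs_div, abs_of_pos (by positivity : (0 : ℝ) < 2 ^ (k + 1))]
    calc _ ≤ C / 2 ^ (k + 1) := div_le_div_of_nonneg_right this (by positivity)
      _ = C / 2 / 2 ^ k := by rw [pow_succ]; ring
  have hlim := (cauchySeq_of_le_geometric_two hstep).tendsto_limUnder
  refine ⟨hlim, ?_⟩
  simpa [Real.dist_eq, homogenization] using dist_le_of_le_geometric_two_of_tendsto₀ hstep hlim

theorem homogenization_add (hadd : ∀ s t, 0 < s → 0 < t → |f (s + t) - f s - f t| ≤ C)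
    {s t : ℝ} (hs : 0 < s) (ht : 0 < t) :
    homogenization f (s + t) = homogenization f s + homogenization f t := by
  have hlim := (((tendsto_homogenization hadd (add_pos hs ht)).1.sub
    (tendsto_homogenization hadd hs).1).sub (tendsto_homogenization hadd ht).1).abs
  have hbound (k : ℕ) : |f (2 ^ k * (s + t)) / 2 ^ k - f (2 ^ k * s) / 2 ^ k
      - f (2 ^ k * t) / 2 ^ k| ≤ C / 2 ^ k := by
    rw [div_sub_div_same, div_sub_div_same, abs_div, abs_of_pos (by positivity : (0 : ℝ) < 2 ^ k),
      mul_add]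
    exact div_le_div_of_nonneg_right (hadd _ _ (by positivity) (by positivity)) (by positivity)
  have hzero : Tendsto (fun k : ℕ => C / 2 ^ k) atTop (𝓝 0) :=
    tendsto_const_nhds.div_atTop (tendsto_pow_atTop_atTop_of_one_lt one_lt_two)
  have := le_of_tendsto_of_tendsto' hlim hzero hbound
  linarith [abs_nonpos_iff.1 this]

theorem exists_abs_sub_mul_le_of_quasiAdditive
    (hadd : ∀ s t, 0 < s → 0 < t → |f (s + t) - f s - f t| ≤ C) (hnn : ∀ t, 0 < t → 0 ≤ f t) :
    ∃ c, ∀ t, 0 < t → |f t - c * t| ≤ C := by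
  have hφnn (t : ℝ) (ht : 0 < t) : 0 ≤ homogenization f t :=
    ge_of_tendsto (tendsto_homogenization hadd ht).1
      (Eventually.of_forall fun k => div_nonneg (hnn _ (by positivity)) (by positivity))
  refine ⟨homogenization f 1, fun t ht => ?_⟩
  rw [← eq_mul_of_add_of_nonneg (fun s t => homogenization_add hadd) hφnn ht]
  exact (tendsto_homogenization hadd ht).2

theorem le_of_forall_mul_le_mul_add {c b C : ℝ} (h : ∀ t, 0 < t → c * t ≤ b * t + C) :
    c ≤ b := by
  by_contra! hlt
  have hcb : 0 < c - b := sub_pos.2 hlt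
  have := h ((|C| + 1) / (c - b)) (by positivity)
  have e : (c - b) * ((|C| + 1) / (c - b)) = |C| + 1 := mul_div_cancel₀ _ hcb.ne'
  nlinarith [le_abs_self C]

theorem eq_of_abs_sub_mul_le {f : ℝ → ℝ} {c c' C C' : ℝ} (hc : ∀ t, 0 < t → |f t - c * t| ≤ C)
    (hc' : ∀ t, 0 < t → |f t - c' * t| ≤ C') : c = c' := by
  refine le_antisymm (le_of_forall_mul_le_mul_add (C := C + C') fun t ht => ?_)
    (le_of_forall_mul_le_mul_add (C := C + C') fun t ht => ?_) <;>
  linarith [abs_le.1 (hc t ht), abs_le.1 (hc' t ht)]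

end Quasimorphism

section PlanarSolutions

structure IsPlanarSolution (F : ℝ → ℝ) (ℓ : E →L[ℝ] ℝ) (u : E → ℝ → ℝ) : Prop
    extends IsHeatSolution F u where
  initial : ∀ x, u x 0 = ℓ x
  bddOnStrips : BddOnStrips fun x t => u x t - ℓ x

namespace IsPlanarSolution

variable {F : ℝ → ℝ} {K : ℝ≥0} {ℓ : EuclideanSpace ℝ (Fin n) →L[ℝ] ℝ}
  {u : EuclideanSpace ℝ (Fin n) → ℝ → ℝ} {b : ℝ}

theorem planar_le (hu : IsPlanarSolution F ℓ u) (hF : LipschitzWith K F)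
    (hb : ∀ s, b + F s ≤ 0) : ∀ x t, 0 ≤ t → ℓ x + b * t ≤ u x t := by
  refine comparison_principle hF (parabolicRegular_planar ℓ b) hu.toParabolicRegular ?_
    (fun x => by simp [hu.initial]) fun x t ht => ?_
  · convert (bddOnStrips_mul_time b).sub hu.bddOnStrips using 1
    ext x t
    simp only [Pi.sub_apply]
    ring
  · rw [heatOp_planar, hu.heatOp_add_eq_zero x t ht]
    exact hb _

theorem le_planar (hu : IsPlanarSolution F ℓ u) (hF : LipschitzWith K F)
    (hb : ∀ s, 0 ≤ b + F s) : ∀ x t, 0 ≤ t → u x t ≤ ℓ x + b * t := by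
  refine comparison_principle hF hu.toParabolicRegular (parabolicRegular_planar ℓ b) ?_
    (fun x => by simp [hu.initial]) fun x t ht => ?_
  · convert hu.bddOnStrips.sub (bddOnStrips_mul_time b) using 1
    ext x t
    simp only [Pi.sub_apply]
    ring
  · rw [heatOp_planar, hu.heatOp_add_eq_zero x t ht]
    exact hb _

theorem bddOnStrips_translate_sub (hu : IsPlanarSolution F ℓ u) (z : E) {s : ℝ} (hs : 0 ≤ s)
    (m : ℝ) : BddOnStrips ((fun x t => u (x + z) (s + t) - m) - u) := by
  convert ((hu.bddOnStrips.translate z hs).sub hu.bddOnStrips).add_const (ℓ z - m) using 1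
  ext x t
  simp only [Pi.sub_apply, map_add]
  ring

theorem translate_le (hu : IsPlanarSolution F ℓ u) (hF : LipschitzWith K F)
    (hper : Function.Periodic F 1) (z : E) {s : ℝ} (hs : 0 ≤ s) (m : ℤ)
    (h0 : ∀ x, u (x + z) s - m ≤ ℓ x) : ∀ x t, 0 ≤ t → u (x + z) (s + t) - m ≤ u x t :=
  comparison_principle hF (hu.translate hper z hs m).toParabolicRegular hu.toParabolicRegular
    (hu.bddOnStrips_translate_sub z hs m) (fun x => by simpa [hu.initial] using h0 x)
    fun x t ht => by
      rw [(hu.translate hper z hs m).heatOp_add_eq_zero x t ht, hu.heatOp_add_eq_zero x t ht]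

theorem le_translate (hu : IsPlanarSolution F ℓ u) (hF : LipschitzWith K F)
    (hper : Function.Periodic F 1) (z : E) {s : ℝ} (hs : 0 ≤ s) (m : ℤ)
    (h0 : ∀ x, ℓ x ≤ u (x + z) s - m) : ∀ x t, 0 ≤ t → u x t ≤ u (x + z) (s + t) - m :=
  comparison_principle hF hu.toParabolicRegular (hu.translate hper z hs m).toParabolicRegular
    (by rw [← neg_sub]; exact (hu.bddOnStrips_translate_sub z hs m).neg)
    (fun x => by simpa [hu.initial] using h0 x)
    fun x t ht => by
      rw [(hu.translate hper z hs m).heatOp_add_eq_zero x t ht, hu.heatOp_add_eq_zero x t ht]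

theorem abs_sub_sub_le_one (hu : IsPlanarSolution F ℓ u) (hF : LipschitzWith K F)
    (hper : Function.Periodic F 1) (x : E) {t : ℝ} (ht : 0 ≤ t) :
    |u x t - ℓ x - u 0 t| ≤ 1 := by
  have hspace (y z : E) : u (y + z) t - ⌈ℓ z⌉ ≤ u y t := by
    simpa using hu.translate_le hF hper z le_rfl ⌈ℓ z⌉
      (fun y => by simpa [hu.initial] using Int.le_ceil (ℓ z)) y t ht
  have h1 := hspace 0 x
  have h2 := hspace x (-x)
  simp only [zero_add, add_neg_cancel, map_neg] at h1 h2
  rw [abs_le]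
  constructor <;> linarith [Int.ceil_lt_add_one (ℓ x), Int.ceil_lt_add_one (-ℓ x)]

theorem abs_add_sub_sub_le_two (hu : IsPlanarSolution F ℓ u) (hF : LipschitzWith K F)
    (hper : Function.Periodic F 1) {s t : ℝ} (hs : 0 ≤ s) (ht : 0 ≤ t) :
    |u 0 (s + t) - u 0 s - u 0 t| ≤ 2 := by
  have hosc (x : E) := abs_le.1 (hu.abs_sub_sub_le_one hF hper x hs)
  have h1 := hu.translate_le hF hper 0 hs ⌈u 0 s + 1⌉
    (fun x => by simp only [add_zero]; linarith [(hosc x).2, Int.le_ceil (u 0 s + 1)]) 0 t ht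
  have h2 := hu.le_translate hF hper 0 hs ⌊u 0 s - 1⌋
    (fun x => by simp only [add_zero]; linarith [(hosc x).1, Int.floor_le (u 0 s - 1)]) 0 t ht
  simp only [add_zero] at h1 h2
  rw [abs_le]
  constructor <;> linarith [Int.ceil_lt_add_one (u 0 s + 1), Int.sub_one_lt_floor (u 0 s - 1)]

theorem exists_abs_sub_sub_mul_le (hu : IsPlanarSolution F ℓ u) (hF : LipschitzWith K F)
    (hper : Function.Periodic F 1) (hneg : ∀ s, F s ≤ 0) :
    ∃ c, ∀ x t, 0 ≤ t → |u x t - ℓ x - c * t| ≤ 3 := by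
  obtain ⟨c, hc⟩ := exists_abs_sub_mul_le_of_quasiAdditive (f := u 0)
    (fun s t hs ht => hu.abs_add_sub_sub_le_two hF hper hs.le ht.le)
    (fun t ht => by simpa using hu.planar_le hF (b := 0) (by simpa using hneg) 0 t ht.le)
  refine ⟨c, fun x t ht => ?_⟩
  rcases ht.eq_or_lt with rfl | ht
  · simp [hu.initial]
  calc |u x t - ℓ x - c * t| ≤ |u x t - ℓ x - u 0 t| + |u 0 t - c * t| := abs_sub_le _ _ _
    _ ≤ 1 + 2 := add_le_add (hu.abs_sub_sub_le_one hF hper x ht.le) (hc t ht)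
    _ = 3 := by norm_num

theorem speed_le (hu : IsPlanarSolution F ℓ u) (hF : LipschitzWith K F) {c C : ℝ}
    (hc : ∀ t, 0 < t → |u 0 t - c * t| ≤ C) (hb : ∀ s, 0 ≤ b + F s) : c ≤ b :=
  le_of_forall_mul_le_mul_add (C := C) fun t ht => by
    have := hu.le_planar hF hb 0 t ht.le
    rw [map_zero, zero_add] at this
    linarith [(abs_le.1 (hc t ht)).1]

theorem le_speed (hu : IsPlanarSolution F ℓ u) (hF : LipschitzWith K F) {c C : ℝ}
    (hc : ∀ t, 0 < t → |u 0 t - c * t| ≤ C) (hb : ∀ s, b + F s ≤ 0) : b ≤ c :=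
  le_of_forall_mul_le_mul_add (C := C) fun t ht => by
    have := hu.planar_le hF hb 0 t ht.le
    rw [map_zero, zero_add] at this
    linarith [(abs_le.1 (hc t ht)).2]

end IsPlanarSolution

end PlanarSolutions

theorem Function.Periodic.exists_pos_forall_le_neg {g : ℝ → ℝ} {c : ℝ}
    (hper : Function.Periodic g c) (hc : c ≠ 0) (hg : Continuous g) (hneg : ∀ s, g s < 0) :
    ∃ δ > 0, ∀ s, g s ≤ -δ := by
  obtain ⟨_, ⟨s₀, rfl⟩, hmax⟩ :=
    (hper.compact_of_continuous hc hg).exists_isGreatest (range_nonempty g)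
  exact ⟨-g s₀, neg_pos.2 (hneg s₀), fun s => (neg_neg (g s₀)).symm ▸ hmax ⟨s, rfl⟩⟩

theorem almost_planar_solutions_general
    (n : ℕ) (α : ℝ)
    (p : EuclideanSpace ℝ (Fin n))
    (g : ℝ → ℝ) (L : NNReal) (M : ℝ)
    (hgLip : LipschitzWith L g)
    (hgper : ∀ s, g (s + 1) = g s)
    (hgneg : ∀ s, g s ≤ 0)
    (hgM : ∀ s, |g s| ≤ M)
    (v : ℝ → EuclideanSpace ℝ (Fin n) → ℝ → ℝ)
    (hcont : ∀ ε, 0 < ε → ε ≤ 1 →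
      ContinuousOn (fun q : EuclideanSpace ℝ (Fin n) × ℝ => v ε q.1 q.2) {q | 0 ≤ q.2})
    (hx : ∀ ε, 0 < ε → ε ≤ 1 → ∀ t, 0 < t → ContDiff ℝ 2 fun x => v ε x t)
    (ht : ∀ ε, 0 < ε → ε ≤ 1 → ∀ x t, 0 < t → DifferentiableAt ℝ (v ε x) t)
    (hbdd : ∀ ε, 0 < ε → ε ≤ 1 → ∀ T, 0 < T → ∃ B, ∀ x t, 0 ≤ t → t ≤ T →
      |v ε x t - ∑ i, p i * x i| ≤ B ∧
      ‖fderiv ℝ (fun y => v ε y t - ∑ i, p i * y i) x‖ ≤ B)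
    (hpde : ∀ ε, 0 < ε → ε ≤ 1 → ∀ x t, 0 < t →
      deriv (v ε x) t - lap (fun y => v ε y t) x + ε ^ (1 - α) * g (v ε x t) = 0)
    (hinit : ∀ ε, 0 < ε → ε ≤ 1 → ∀ x, v ε x 0 = ∑ i, p i * x i) :
    ∃ ε₀ > 0, ∃ K > 0, ∀ ε, 0 < ε → ε ≤ ε₀ → ε ≤ 1 →
      ∃ c : ℝ,
        (∀ x t, 0 ≤ t → |v ε x t - ∑ i, p i * x i - c * t| ≤ K) ∧
        (∀ c' : ℝ, (∃ K', ∀ x t, 0 ≤ t → |v ε x t - ∑ i, p i * x i - c' * t| ≤ K') →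
          c' = c) ∧
        0 ≤ c ∧ c ≤ ε ^ (1 - α) * M ∧ ((∀ s, g s < 0) → 0 < c) := by
  refine ⟨1, one_pos, 3, by norm_num, fun ε hε _ hε1 => ?_⟩
  set a := ε ^ (1 - α)
  have ha : 0 < a := Real.rpow_pos_of_pos hε _
  have hℓ (x : EuclideanSpace ℝ (Fin n)) : innerSL ℝ p x = ∑ i, p i * x i := by
    simp [PiLp.inner_apply, mul_comm]
  have hu : IsPlanarSolution (fun s => a * g s) (innerSL ℝ p) (v ε) :=
    { continuousOn := hcont ε hε hε1
      contDiff := hx ε hε hε1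
      differentiableAt := ht ε hε hε1
      heatOp_add_eq_zero := hpde ε hε hε1
      initial := fun x => (hinit ε hε hε1 x).trans (hℓ x).symm
      bddOnStrips := fun T => by
        obtain ⟨B, hB⟩ := hbdd ε hε hε1 (max T 1) (by positivity)
        refine ⟨B, fun x t ht => ?_⟩
        simpa [hℓ] using (hB x t ht.1 (ht.2.trans (le_max_left T 1))).1 }
  have hF : LipschitzWith (‖a‖₊ * L) fun s => a * g s := (lipschitzWith_smul a).comp hgLip
  have hper : Function.Periodic (fun s => a * g s) 1 := fun s => by simp only [hgper]
  have hneg (s : ℝ) : a * g s ≤ 0 := mul_nonpos_of_nonneg_of_nonpos ha.le (hgneg s)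
  obtain ⟨c, hc⟩ := hu.exists_abs_sub_sub_mul_le hF hper hneg
  have hc0 : ∀ t, 0 < t → |v ε 0 t - c * t| ≤ 3 := fun t ht => by simpa using hc 0 t ht.le
  refine ⟨c, fun x t ht => by simpa [hℓ] using hc x t ht, fun c' ⟨K', hK'⟩ => ?_,
    hu.le_speed hF hc0 (b := 0) (by simpa using hneg), hu.speed_le hF hc0 fun s => ?_,
    fun hlt => ?_⟩
  · exact eq_of_abs_sub_mul_le (fun t ht => by simpa using hK' 0 t ht.le) hc0
  · nlinarith [neg_abs_le (g s), hgM s]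
  · obtain ⟨δ, hδ, hgδ⟩ := hper.exists_pos_forall_le_neg one_ne_zero hF.continuous
      fun s => mul_neg_of_pos_of_neg ha (hlt s)
    exact hδ.trans_le (hu.le_speed hF hc0 (b := δ) fun s => by linarith [hgδ s])

/-- existence of almost planar solutions.  For `ε` sufficiently small there is
a unique constant `c_ε(p)` such that the solution `v^ε` of
`v_t - Δv + ε^{1-α} g(v) = 0`, `v(x,0) = p·x`, stays at bounded distance `K` (with `K`
depending only on the Lipschitz norm of `g` and on `n`) from the plane `p·x + c_ε(p) t`;
moreover `0 ≤ c_ε(p) ≤ ε^{1-α}‖g‖_∞`, and `c_ε(p) > 0` when `g < 0` everywhere. -/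
theorem almost_planar_solutions
    (n : ℕ) (hn : 1 ≤ n) (α : ℝ) (hα : 0 ≤ α ∧ α < 1)
    (p : EuclideanSpace ℝ (Fin n))
    (g : ℝ → ℝ) (L : NNReal) (M : ℝ)
    (hgLip : LipschitzWith L g)
    (hgper : ∀ s, g (s + 1) = g s)
    (hgneg : ∀ s, g s ≤ 0)
    (hgM : ∀ s, |g s| ≤ M)
    (v : ℝ → EuclideanSpace ℝ (Fin n) → ℝ → ℝ)
    (hcont : ∀ ε, 0 < ε → ε ≤ 1 →
      ContinuousOn (fun q : EuclideanSpace ℝ (Fin n) × ℝ => v ε q.1 q.2) {q | 0 ≤ q.2})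
    (hx : ∀ ε, 0 < ε → ε ≤ 1 → ∀ t, 0 < t → ContDiff ℝ 2 fun x => v ε x t)
    (ht : ∀ ε, 0 < ε → ε ≤ 1 → ∀ x t, 0 < t → DifferentiableAt ℝ (v ε x) t)
    (hbdd : ∀ ε, 0 < ε → ε ≤ 1 → ∀ T, 0 < T → ∃ B, ∀ x t, 0 ≤ t → t ≤ T →
      |v ε x t - ∑ i, p i * x i| ≤ B ∧
      ‖fderiv ℝ (fun y => v ε y t - ∑ i, p i * y i) x‖ ≤ B)
    (hpde : ∀ ε, 0 < ε → ε ≤ 1 → ∀ x t, 0 < t →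
      deriv (v ε x) t - lap (fun y => v ε y t) x + ε ^ (1 - α) * g (v ε x t) = 0)
    (hinit : ∀ ε, 0 < ε → ε ≤ 1 → ∀ x, v ε x 0 = ∑ i, p i * x i) :
    ∃ ε₀ > 0, ∃ K > 0, ∀ ε, 0 < ε → ε ≤ ε₀ → ε ≤ 1 →
      ∃ c : ℝ,
        (∀ x t, 0 ≤ t → |v ε x t - ∑ i, p i * x i - c * t| ≤ K) ∧
        (∀ c' : ℝ, (∃ K', ∀ x t, 0 ≤ t → |v ε x t - ∑ i, p i * x i - c' * t| ≤ K') →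
          c' = c) ∧
        0 ≤ c ∧ c ≤ ε ^ (1 - α) * M ∧ ((∀ s, g s < 0) → 0 < c) :=
  almost_planar_solutions_general n α p g L M hgLip hgper hgneg hgM v hcont hx ht hbdd hpde hinit
end

section
/- Suppose there exists v₀ ∈ [0,1] with g(v₀) = 0, and let v : [0,∞) → ℝ be the solution of the ODE v'(t) + ε^{1−α} g(v(t)) = 0 with v(0) = 0. Then v₀ − 1 ≤ v(t) ≤ v₀ for every t ≥ 0, and consequently lim_{t→∞} v(t)/t = 0, i.e. c_ε(0) = 0. -/
open Filter Set

/-!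
Since `g` is 1-periodic, `v₀ - 1` and `v₀` are both equilibria of the autonomous Lipschitz
equation. By uniqueness a solution that reaches an equilibrium stays there, so by the
intermediate value theorem the solution starting at `0 ∈ [v₀ - 1, v₀]` never leaves that
interval. A bounded `v` has `v t / t → 0`, and if `v t - c t` is bounded then so is `c t`,
forcing `c = 0`.
-/

theorem ODE_solution_eq_of_apply_eq_zero {E : Type*} [NormedAddCommGroup E] [NormedSpace ℝ E]
    {F : E → E} {K : NNReal} (hF : LipschitzWith K F) {c : E} (hc : F c = 0)
    {v : ℝ → E} {s : ℝ}
    (hv : ∀ t, s ≤ t → HasDerivAt v (F (v t)) t) (hvs : v s = c) {t : ℝ} (hst : s ≤ t) :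
    v t = c := by
  have hcont : ContinuousOn v (Icc s t) := fun r hr =>
    (hv r hr.1).continuousAt.continuousWithinAt
  refine ODE_solution_unique_of_mem_Icc_right (v := fun _ => F) (s := fun _ => univ)
    (g := fun _ => c) (fun _ _ => hF.lipschitzOnWith) hcont
    (fun r hr => (hv r hr.1).hasDerivWithinAt) (fun _ _ => mem_univ _) continuousOn_const
    (fun r _ => ?_) (fun _ _ => mem_univ _) hvs ⟨hst, le_rfl⟩
  simpa [hc] using hasDerivWithinAt_const r (Ici r) c

theorem ODE_solution_mem_Icc_of_apply_eq_zero {F : ℝ → ℝ} {K : NNReal}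
    (hF : LipschitzWith K F) {a b : ℝ} {v : ℝ → ℝ} {s : ℝ}
    (ha : F a = 0) (hb : F b = 0) (hv : ∀ t, s ≤ t → HasDerivAt v (F (v t)) t)
    (hvs : v s ∈ Icc a b) {t : ℝ} (hst : s ≤ t) : v t ∈ Icc a b := by
  have hcont : ContinuousOn v (Icc s t) := fun r hr =>
    (hv r hr.1).continuousAt.continuousWithinAt
  have stays (c : ℝ) (hc : F c = 0) (hmem : c ∈ v '' Icc s t) : v t = c := by
    obtain ⟨r, hr, hvr⟩ := hmem
    exact ODE_solution_eq_of_apply_eq_zero hF hc (fun u hu => hv u (hr.1.trans hu)) hvr hr.2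
  constructor
  · by_contra! h
    have := stays a ha (intermediate_value_Icc' hst hcont ⟨h.le, hvs.1⟩)
    linarith
  · by_contra! h
    have := stays b hb (intermediate_value_Icc hst hcont ⟨hvs.2, h.le⟩)
    linarith

theorem tendsto_div_atTop_zero_of_abs_le {f : ℝ → ℝ} {M : ℝ} (hf : ∀ t, 0 ≤ t → |f t| ≤ M) :
    Tendsto (fun t => f t / t) atTop (nhds 0) := by
  simp_rw [div_eq_inv_mul]
  exact tendsto_inv_atTop_zero.zero_mul_isBoundedUnder_le
    (isBoundedUnder_of_eventually_le (a := M) ((eventually_ge_atTop 0).mono hf))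

theorem eq_zero_of_abs_mul_le {c M : ℝ} (h : ∀ t, 0 ≤ t → |c * t| ≤ M) : c = 0 := by
  have hc : Tendsto (fun t : ℝ => c * t / t) atTop (nhds c) :=
    tendsto_const_nhds.congr' <|
      (eventually_gt_atTop 0).mono fun t ht => by field_simp
  exact tendsto_nhds_unique hc (tendsto_div_atTop_zero_of_abs_le h)

theorem ode_speed_zero_when_g_has_zero_general
    (α ε : ℝ)
    (g : ℝ → ℝ) (L : NNReal)
    (hgLip : LipschitzWith L g)
    (hgper : ∀ s, g (s + 1) = g s)
    (v₀ : ℝ) (hv₀ : v₀ ∈ Set.Icc (0:ℝ) 1) (hgv₀ : g v₀ = 0)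
    (v : ℝ → ℝ)
    (hode : ∀ t, 0 ≤ t → HasDerivAt v (-(ε ^ (1 - α) * g (v t))) t)
    (hv0 : v 0 = 0) :
    (∀ t, 0 ≤ t → v₀ - 1 ≤ v t ∧ v t ≤ v₀) ∧
      Tendsto (fun t => v t / t) atTop (nhds 0) ∧
      ∀ c : ℝ, (∃ K, ∀ t, 0 ≤ t → |v t - c * t| ≤ K) → c = 0 := by
  have hLip : LipschitzWith _ fun x => -(ε ^ (1 - α) * g x) :=
    ((lipschitzWith_smul (ε ^ (1 - α))).comp hgLip).neg
  have hgv₀' : g (v₀ - 1) = 0 := by rw [← hgper, sub_add_cancel, hgv₀]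
  have hbound (t : ℝ) (ht : 0 ≤ t) : v₀ - 1 ≤ v t ∧ v t ≤ v₀ :=
    ODE_solution_mem_Icc_of_apply_eq_zero hLip (by simp [hgv₀']) (by simp [hgv₀]) hode
      (by rw [hv0]; constructor <;> linarith [hv₀.1, hv₀.2]) ht
  have habs (t : ℝ) (ht : 0 ≤ t) : |v t| ≤ 1 := by
    rw [abs_le]; constructor <;> linarith [hbound t ht, hv₀.1, hv₀.2]
  refine ⟨hbound, tendsto_div_atTop_zero_of_abs_le habs, fun c ⟨K, hK⟩ => ?_⟩
  refine eq_zero_of_abs_mul_le (M := K + 1) fun t ht => ?_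
  calc |c * t| = |v t - (v t - c * t)| := by rw [sub_sub_cancel]
    _ ≤ |v t| + |v t - c * t| := abs_sub _ _
    _ ≤ 1 + K := add_le_add (habs t ht) (hK t ht)
    _ = K + 1 := add_comm _ _

/-- for the planar problem with `p = 0`, if `g` has a zero `v₀ ∈ [0,1]`,
then the solution of `v' + ε^{1-α} g(v) = 0`, `v(0) = 0`, satisfies
`v₀ - 1 ≤ v(t) ≤ v₀` for all `t ≥ 0`; consequently `v(t)/t → 0` and the unique constant
`c_ε(0)` with `v(t) - c_ε(0) t` bounded is `0`. -/
theorem ode_speed_zero_when_g_has_zero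
    (α ε : ℝ) (hα : 0 ≤ α ∧ α < 1) (hε : 0 < ε ∧ ε ≤ 1)
    (g : ℝ → ℝ) (L : NNReal)
    (hgLip : LipschitzWith L g)
    (hgper : ∀ s, g (s + 1) = g s)
    (hgneg : ∀ s, g s ≤ 0)
    (v₀ : ℝ) (hv₀ : v₀ ∈ Set.Icc (0:ℝ) 1) (hgv₀ : g v₀ = 0)
    (v : ℝ → ℝ)
    (hode : ∀ t, 0 ≤ t → HasDerivAt v (-(ε ^ (1 - α) * g (v t))) t)
    (hv0 : v 0 = 0) :
    (∀ t, 0 ≤ t → v₀ - 1 ≤ v t ∧ v t ≤ v₀) ∧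
      Tendsto (fun t => v t / t) atTop (nhds 0) ∧
      ∀ c : ℝ, (∃ K, ∀ t, 0 ≤ t → |v t - c * t| ≤ K) → c = 0 :=
  ode_speed_zero_when_g_has_zero_general α ε g L hgLip hgper v₀ hv₀ hgv₀ v hode hv0
end

section
/- Let g : ℝ → ℝ be continuous, 1-periodic, with g(s) < 0 for every s. Then (∫₀¹ ds/(−g(s)))^{−1} ≤ ∫₀¹ (−g(s)) ds, with equality if and only if g is constant. Consequently, the effective speed c(p), defined by c(p) = −∫₀¹ g(s) ds for p ≠ 0 and c(0) = −(∫₀¹ (1/g(s)) ds)^{−1}, satisfies c(0) ≤ c(p) for all p ≠ 0, with strict inequality (hence discontinuity of c at p = 0, while remaining lower semicontinuous there) whenever g is not constant. -/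
open Set

/-- for `g` continuous, `1`-periodic and strictly negative, the
harmonic-mean/arithmetic-mean inequality `(∫₀¹ ds/(-g))⁻¹ ≤ ∫₀¹ (-g)` holds, with
equality iff `g` is constant.  Consequently the effective speed `c`, with
`c(p) = -∫₀¹ g` for `p ≠ 0` and `c(0) = -(∫₀¹ 1/g)⁻¹`, satisfies `c(0) ≤ c(p)` for all
`p ≠ 0`, with strict inequality whenever `g` is not constant. -/
theorem effective_speed_discontinuity
    (n : ℕ) (hn : 1 ≤ n)
    (g : ℝ → ℝ)
    (hgcont : Continuous g)
    (hgper : ∀ s, g (s + 1) = g s)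
    (hgneg : ∀ s, g s < 0)
    (c : EuclideanSpace ℝ (Fin n) → ℝ)
    (hc₁ : ∀ p, p ≠ 0 → c p = -∫ s in (0:ℝ)..1, g s)
    (hc₂ : c 0 = -(∫ s in (0:ℝ)..1, (g s)⁻¹)⁻¹) :
    (∫ s in (0:ℝ)..1, (-g s)⁻¹)⁻¹ ≤ ∫ s in (0:ℝ)..1, -g s ∧
      ((∫ s in (0:ℝ)..1, (-g s)⁻¹)⁻¹ = ∫ s in (0:ℝ)..1, -g s ↔ ∀ s, g s = g 0) ∧
      (∀ p, p ≠ 0 → c 0 ≤ c p) ∧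
      ((¬ ∀ s, g s = g 0) → ∀ p, p ≠ 0 → c 0 < c p) := by
  have hf : Continuous fun s => -g s := hgcont.neg
  have hfpos : ∀ s, 0 < -g s := fun s => neg_pos.2 (hgneg s)
  have hfne : ∀ s, -g s ≠ 0 := fun s => (hfpos s).ne'
  have hfinv : Continuous fun s => (-g s)⁻¹ := hf.inv₀ hfne
  set A := ∫ s in (0:ℝ)..1, -g s with hA_def
  set B := ∫ s in (0:ℝ)..1, (-g s)⁻¹ with hB_def
  have hfi : IntervalIntegrable (fun s => -g s) MeasureTheory.volume 0 1 :=
    hf.intervalIntegrable _ _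
  have hfinvi : IntervalIntegrable (fun s => (-g s)⁻¹) MeasureTheory.volume 0 1 :=
    hfinv.intervalIntegrable _ _
  have hA : 0 < A := intervalIntegral.intervalIntegral_pos_of_pos hfi hfpos one_pos
  have hB : 0 < B := intervalIntegral.intervalIntegral_pos_of_pos hfinvi
    (fun s => inv_pos.2 (hfpos s)) one_pos
  set φ : ℝ → ℝ := fun s => -g s * A⁻¹ + A * (-g s)⁻¹ - 2 with hφ_def
  have hφeq : ∀ s, φ s = (-g s - A) ^ 2 / (A * -g s) := by
    intro s
    have hgs : g s ≠ 0 := (hgneg s).ne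
    have hA' : A ≠ 0 := hA.ne'
    rw [hφ_def, eq_div_iff (mul_ne_zero hA' (hfne s))]
    have e : (-g s * A⁻¹ + A * (-g s)⁻¹ - 2) * (A * -g s)
        = (-g s * -g s) * (A⁻¹ * A) + (A * A) * ((-g s)⁻¹ * -g s) - 2 * (A * -g s) := by
      ring
    rw [e, inv_mul_cancel₀ hA', inv_mul_cancel₀ (hfne s)]
    ring
  have hφnonneg : ∀ s, 0 ≤ φ s := by
    intro s
    rw [hφeq s]
    have h1 := hfpos s
    positivity
  have hφcont : Continuous φ := by
    rw [hφ_def]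
    exact ((hf.mul continuous_const).add (continuous_const.mul hfinv)).sub continuous_const
  have hφint : (∫ s in (0:ℝ)..1, φ s) = A * B - 1 := by
    rw [hφ_def]
    rw [intervalIntegral.integral_sub (((hfi.mul_const _).add (hfinvi.const_mul _)))
      (intervalIntegrable_const)]
    rw [intervalIntegral.integral_add (hfi.mul_const _) (hfinvi.const_mul _)]
    rw [intervalIntegral.integral_mul_const, intervalIntegral.integral_const_mul,
      intervalIntegral.integral_const]
    rw [← hA_def, ← hB_def]
    field_simp
    ring
  have hAB : 1 ≤ A * B := by
    have h0 : 0 ≤ ∫ s in (0:ℝ)..1, φ s :=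
      intervalIntegral.integral_nonneg (by norm_num) (fun u _ => hφnonneg u)
    linarith [hφint ▸ h0]
  have main1 : B⁻¹ ≤ A := by
    rw [inv_eq_one_div, div_le_iff₀ hB]
    linarith
  -- equality implies g constant
  have heq_const : B⁻¹ = A → ∀ s, g s = g 0 := by
    intro h
    have hAB1 : A * B = 1 := by
      rw [← h]
      field_simp
    have hzero : ∀ s ∈ Icc (0:ℝ) 1, φ s = 0 := by
      intro s hs
      by_contra hne
      have hpos : 0 < φ s := (hφnonneg s).lt_of_ne (Ne.symm hne)
      have hint0 : (∫ t in (0:ℝ)..1, φ t) = 0 := by rw [hφint, hAB1]; ring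
      have hioc : (∫ t in Ioc (0:ℝ) 1, φ t) = 0 := by
        rw [← intervalIntegral.integral_of_le (by norm_num : (0:ℝ) ≤ 1)]
        exact hint0
      have hintOn : MeasureTheory.IntegrableOn φ (Ioc (0:ℝ) 1) MeasureTheory.volume :=
        (hφcont.intervalIntegrable 0 1).1
      have hae := (MeasureTheory.setIntegral_eq_zero_iff_of_nonneg_ae
        (Filter.Eventually.of_forall fun t => hφnonneg t) hintOn).1 hioc
      have hae' : ∀ᵐ x ∂(MeasureTheory.volume.restrict (Ioc (0:ℝ) 1)), φ x = 0 :=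
        hae.mono (fun x hx => hx)
      rw [MeasureTheory.ae_restrict_iff' measurableSet_Ioc] at hae'
      rw [MeasureTheory.ae_iff] at hae'
      set V := {x | 0 < φ x} ∩ Ioo (0:ℝ) 1 with hV
      have hVopen : IsOpen V := (isOpen_lt continuous_const hφcont).inter isOpen_Ioo
      have hVsub : V ⊆ {x | ¬(x ∈ Ioc (0:ℝ) 1 → φ x = 0)} := by
        rintro x ⟨hx1, hx2⟩
        intro hcon
        exact (ne_of_gt (show (0:ℝ) < φ x from hx1)) (hcon (Ioo_subset_Ioc_self hx2))
      have hVne : V.Nonempty := by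
        have hscl : s ∈ closure (Ioo (0:ℝ) 1) := by
          rw [closure_Ioo (by norm_num : (0:ℝ) ≠ 1)]
          exact hs
        rcases mem_closure_iff.1 hscl _ (isOpen_lt continuous_const hφcont) hpos with
          ⟨y, hy1, hy2⟩
        exact ⟨y, hy1, hy2⟩
      have hVpos := hVopen.measure_pos (μ := MeasureTheory.volume) hVne
      have hVnull := MeasureTheory.measure_mono_null hVsub hae'
      exact absurd hVnull (ne_of_gt hVpos)
    have hgA : ∀ s ∈ Icc (0:ℝ) 1, g s = -A := by
      intro s hs
      have h0 := hzero s hs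
      rw [hφeq s] at h0
      rcases div_eq_zero_iff.1 h0 with h1 | h1
      · have h2 : -g s - A = 0 := (pow_eq_zero_iff two_ne_zero).1 h1
        linarith
      · exact absurd h1 (mul_ne_zero hA.ne' (hfne s))
    intro s
    have hper : Function.Periodic g 1 := hgper
    have hfr : g (Int.fract s) = g s := by
      have h := hper.sub_int_mul_eq (x := s) ⌊s⌋
      rw [mul_one, Int.self_sub_floor] at h
      exact h
    have h1 : g (Int.fract s) = -A :=
      hgA _ ⟨Int.fract_nonneg s, le_of_lt (Int.fract_lt_one s)⟩
    have h2 : g 0 = -A := hgA 0 (by constructor <;> norm_num)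
    rw [← hfr, h1, h2]
  -- g constant implies equality
  have hconst_eq : (∀ s, g s = g 0) → B⁻¹ = A := by
    intro h
    have e1 : A = -g 0 := by
      rw [hA_def, intervalIntegral.integral_congr (g := fun _ => -g 0)
        (fun x _ => by rw [h x]), intervalIntegral.integral_const]
      norm_num
    have e2 : B = (-g 0)⁻¹ := by
      rw [hB_def, intervalIntegral.integral_congr (g := fun _ => (-g 0)⁻¹)
        (fun x _ => by rw [h x]), intervalIntegral.integral_const]
      norm_num
    rw [e1, e2, inv_inv]
  -- relate c to A, B
  have hBg : (∫ s in (0:ℝ)..1, (g s)⁻¹) = -B := by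
    rw [hB_def, ← intervalIntegral.integral_neg]
    apply intervalIntegral.integral_congr
    intro x _
    simp only [inv_neg, neg_neg]
  have hAg : (∫ s in (0:ℝ)..1, g s) = -A := by
    rw [hA_def, intervalIntegral.integral_neg, neg_neg]
  have hc0 : c 0 = B⁻¹ := by rw [hc₂, hBg, inv_neg, neg_neg]
  have hcp : ∀ p : EuclideanSpace ℝ (Fin n), p ≠ 0 → c p = A := by
    intro p hp
    rw [hc₁ p hp, hAg, neg_neg]
  refine ⟨main1, ⟨heq_const, hconst_eq⟩, ?_, ?_⟩
  · intro p hp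
    rw [hc0, hcp p hp]
    exact main1
  · intro h p hp
    rw [hc0, hcp p hp]
    exact lt_of_le_of_ne main1 (fun heq => h (heq_const heq))
end
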